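/- For the three-state WFSA C over the real semiring (states q0, q1, q2; initial weight 1 on q0; final weight 1 on q2; self-loop on q0 weight 1; transition q0→q1 weight μ1(α); self-loop on q1 weight φ1(α); transition q1→q2 weight μ2(α); self-loop on q2 weight φ2(α)), the prefix scores satisfy: C⟦x_{:0}⟧ = 0 and C⟦x_{:t+1}⟧ = C⟦x_{:t}⟧·φ2(x_{t+1}) + β_t·μ2(x_{t+1}), where β_0 = 0 and β_t = β_{t-1}·φ1(x_t) + μ1(x_t). -/

import Mathlib

/-- Transition weights of the three-state WFSA `C` over the real semiring:
states `0 = q0`, `1 = q1`, `2 = q2`; self-loop on `q0` with weight `1`,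
`q0 → q1` with weight `μ1 a`, self-loop on `q1` with weight `φ1 a`,
`q1 → q2` with weight `μ2 a`, self-loop on `q2` with weight `φ2 a`. -/
def cTau {A : Type*} (μ1 φ1 μ2 φ2 : A → ℝ) : Fin 3 → Fin 3 → A → ℝ := fun q q' a =>
  if q = 0 ∧ q' = 0 then 1
  else if q = 0 ∧ q' = 1 then μ1 a
  else if q = 1 ∧ q' = 1 then φ1 a
  else if q = 1 ∧ q' = 2 then μ2 a
  else if q = 2 ∧ q' = 2 then φ2 a
  else 0

/-- Score assigned by WFSA `C` (initial weight 1 on `q0`, final weight 1 on `q2`)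
to the prefix `x_1 … x_t`: sum over all accepting paths of the product of
initial, transition, and final weights. -/
noncomputable def cScore {A : Type*} (μ1 φ1 μ2 φ2 : A → ℝ) (x : ℕ → A) (t : ℕ) : ℝ :=
  ∑ p : Fin (t + 1) → Fin 3,
    (if p 0 = 0 then (1 : ℝ) else 0) *
      (∏ i : Fin t, cTau μ1 φ1 μ2 φ2 (p i.castSucc) (p i.succ) (x (i.1 + 1))) *
      (if p (Fin.last t) = 2 then (1 : ℝ) else 0)

/-!
The score of a prefix is the forward weight of the final state `q2`. Since `q0` only has its
weight-one self-loop, its forward weight is always `1`; the forward weight of `q1` then obeys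
exactly the recurrence defining `β`, and the last step into `q2` comes either from its self-loop or
from `q1`.
-/

open Finset

section ForwardWeight

variable {R Q : Type*} [CommSemiring R] [Fintype Q] [DecidableEq Q]

/-- The transition weights `τ i` of step `i` may depend on `i`, which is how an input string is
fed to the automaton. -/
def forwardWeight (init : Q → R) (τ : ℕ → Q → Q → R) (t : ℕ) (q : Q) : R :=
  ∑ p : Fin (t + 1) → Q,
    init (p 0) * (∏ i : Fin t, τ i (p i.castSucc) (p i.succ)) *
      (if p (Fin.last t) = q then 1 else 0)

variable (init : Q → R) (τ : ℕ → Q → Q → R)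

theorem forwardWeight_zero (q : Q) : forwardWeight init τ 0 q = init q := by
  rw [forwardWeight, ← (Equiv.funUnique (Fin 1) Q).symm.sum_comp]
  simp [Fin.last]

/-- The forward algorithm: a path of length `t + 1` is a path of length `t` followed by one step. -/
theorem forwardWeight_succ (t : ℕ) (q : Q) :
    forwardWeight init τ (t + 1) q = ∑ r, forwardWeight init τ t r * τ t r q := by
  simp only [forwardWeight, sum_mul]
  rw [sum_comm, ← (Fin.snocEquiv fun _ => Q).sum_comp, Fintype.sum_prod_type, sum_comm]
  refine sum_congr rfl fun g _ => ?_
  have snoc_zero (a : Q) : Fin.snoc (α := fun _ => Q) g a 0 = g 0 := Fin.snoc_castSucc (i := 0) ..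
  simp only [Fin.snocEquiv, Equiv.coe_fn_mk, Fin.prod_univ_castSucc, Fin.succ_castSucc,
    Fin.snoc_castSucc, Fin.succ_last, Fin.snoc_last, Fin.val_last, snoc_zero]
  simp [mul_assoc]

end ForwardWeight

section PrefixScores

variable {A : Type*} (μ1 φ1 μ2 φ2 : A → ℝ) (x : ℕ → A)

/-- Step `i` reads the symbol `x (i + 1)`. -/
noncomputable abbrev cForward : ℕ → Fin 3 → ℝ :=
  forwardWeight (fun q => if q = 0 then 1 else 0) fun i q q' => cTau μ1 φ1 μ2 φ2 q q' (x (i + 1))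

theorem cScore_eq_cForward (t : ℕ) : cScore μ1 φ1 μ2 φ2 x t = cForward μ1 φ1 μ2 φ2 x t 2 := rfl

theorem cForward_succ (t : ℕ) (q : Fin 3) :
    cForward μ1 φ1 μ2 φ2 x (t + 1) q =
      ∑ r, cForward μ1 φ1 μ2 φ2 x t r * cTau μ1 φ1 μ2 φ2 r q (x (t + 1)) :=
  forwardWeight_succ _ _ t q

theorem cForward_zero_state (t : ℕ) : cForward μ1 φ1 μ2 φ2 x t 0 = 1 := by
  induction t with
  | zero => simp [forwardWeight_zero]
  | succ t ih => simp [cForward_succ, ih, cTau]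

theorem cForward_one_state_succ (t : ℕ) :
    cForward μ1 φ1 μ2 φ2 x (t + 1) 1 =
      cForward μ1 φ1 μ2 φ2 x t 1 * φ1 (x (t + 1)) + μ1 (x (t + 1)) := by
  simp [cForward_succ, Fin.sum_univ_three, cForward_zero_state, cTau, add_comm]

theorem cForward_two_state_succ (t : ℕ) :
    cForward μ1 φ1 μ2 φ2 x (t + 1) 2 =
      cForward μ1 φ1 μ2 φ2 x t 2 * φ2 (x (t + 1)) + cForward μ1 φ1 μ2 φ2 x t 1 * μ2 (x (t + 1)) := by
  simp [cForward_succ, Fin.sum_univ_three, cTau, add_comm]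

end PrefixScores

theorem stmt5_general {A : Type*} (μ1 φ1 μ2 φ2 : A → ℝ) (x : ℕ → A) (β : ℕ → ℝ)
    (hβ0 : β 0 = 0) (hβ : ∀ t, 1 ≤ t → β t = β (t - 1) * φ1 (x t) + μ1 (x t)) :
    cScore μ1 φ1 μ2 φ2 x 0 = 0 ∧
      ∀ t, cScore μ1 φ1 μ2 φ2 x (t + 1) =
        cScore μ1 φ1 μ2 φ2 x t * φ2 (x (t + 1)) + β t * μ2 (x (t + 1)) := by
  have hβ_eq : ∀ t, β t = cForward μ1 φ1 μ2 φ2 x t 1 := by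
    intro t
    induction t with
    | zero => simp [hβ0, forwardWeight_zero]
    | succ t ih => rw [hβ (t + 1) le_add_self, add_tsub_cancel_right, ih, cForward_one_state_succ]
  refine ⟨by simp [cScore_eq_cForward, forwardWeight_zero], fun t => ?_⟩
  simp only [cScore_eq_cForward, hβ_eq, cForward_two_state_succ]

/-- The prefix scores of WFSA `C` satisfy `C⟦x_{:0}⟧ = 0` and
`C⟦x_{:t+1}⟧ = C⟦x_{:t}⟧·φ2(x_{t+1}) + β_t·μ2(x_{t+1})`, where `β_0 = 0` and
`β_t = β_{t-1}·φ1(x_t) + μ1(x_t)`. -/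
theorem stmt5 {A : Type*} [Fintype A] (μ1 φ1 μ2 φ2 : A → ℝ) (x : ℕ → A) (β : ℕ → ℝ)
    (hβ0 : β 0 = 0) (hβ : ∀ t, 1 ≤ t → β t = β (t - 1) * φ1 (x t) + μ1 (x t)) :
    cScore μ1 φ1 μ2 φ2 x 0 = 0 ∧
      ∀ t, cScore μ1 φ1 μ2 φ2 x (t + 1) =
        cScore μ1 φ1 μ2 φ2 x t * φ2 (x (t + 1)) + β t * μ2 (x (t + 1)) :=
  stmt5_general μ1 φ1 μ2 φ2 x β hβ0 hβ
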